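/- For a partition $\alpha = (\alpha_1, \ldots, \alpha_a)$ with at most $a$ parts, the Schur polynomial of the conjugate partition satisfies the dual Giambelli formula: $\pi_{\bar{\alpha}} = \det\left[\varepsilon_{\alpha_i + j - i}\right]_{i,j=1}^{a}$, where $\varepsilon_m$ denotes the $m$-th elementary symmetric polynomial (with $\varepsilon_m = 0$ for $m < 0$). -/

import Mathlib

/-!
Expanding the determinant by the Leibniz formula and each `ε_m` as the sum of the squarefree
monomials of degree `m`, the right-hand side becomes a signed sum over pairs `(σ, S)` of a
permutation `σ` and subsets `S i ⊆ {0, …, n-1}` with `#(S i) = α i + σ i - i`. Read from level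
`n` down to level `0`, the set `S i` is a lattice path whose position at level `t` is
`i - α i + #{x ∈ S i | t ≤ x}`; it starts at `i - α i` and ends at `σ i`.

If two paths meet, exchanging the tails of a meeting pair below the last meeting level is a
weight-preserving involution that multiplies `σ` by a transposition (Lindström–Gessel–Viennot),
so these terms cancel. Positions move by at most one per level, so non-meeting paths never cross:
then `σ = 1`, and the sets `S i` are exactly the columns of the semistandard tableaux of shape `ᾱ`,
whose generating function is `π_ᾱ`.
-/

open MvPolynomial

/-- A partition: a weakly decreasing, eventually zero sequence of natural numbers
(indexed from 0). -/
structure Partn where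
  parts : ℕ → ℕ
  antitone' : ∀ ⦃i j : ℕ⦄, i ≤ j → parts j ≤ parts i
  finite' : ∃ N, ∀ i, N ≤ i → parts i = 0

/-- The weight `|α|` of a partition: the sum of its parts. -/
noncomputable def Partn.weight (μ : Partn) : ℕ := ∑ᶠ i, μ.parts i

/-- `α ∈ P(a,b)`: at most `a` parts, each part at most `b`. -/
def IsInP (a b : ℕ) (α : Partn) : Prop :=
  (∀ i, a ≤ i → α.parts i = 0) ∧ (∀ i, α.parts i ≤ b)

/-- The conjugate (transpose) partition. -/
noncomputable def Partn.conj (μ : Partn) : Partn where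
  parts j := Set.ncard {i : ℕ | j < μ.parts i}
  antitone' := by
    intro j k hjk
    apply Set.ncard_le_ncard
    · intro i hi
      simp only [Set.mem_setOf_eq] at hi ⊢
      exact lt_of_le_of_lt hjk hi
    · obtain ⟨N, hN⟩ := μ.finite'
      apply Set.Finite.subset (Set.finite_Iio N)
      intro i hi
      simp only [Set.mem_setOf_eq] at hi
      simp only [Set.mem_Iio]
      by_contra h
      push_neg at h
      rw [hN i h] at hi
      exact Nat.not_lt_zero _ hi
  finite' := by
    refine ⟨μ.parts 0, fun j hj => ?_⟩
    have h : {i : ℕ | j < μ.parts i} = ∅ := by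
      ext i
      simp only [Set.mem_setOf_eq, Set.mem_empty_iff_false, iff_false, not_lt]
      exact le_trans (μ.antitone' (Nat.zero_le i)) hj
    try simp only []
    rw [h, Set.ncard_empty]

/-- The rectangular partition `K_{a,b} = (b,…,b)` with `a` parts. -/
def Partn.rect (a b : ℕ) : Partn where
  parts i := if i < a then b else 0
  antitone' := by
    intro i j hij
    by_cases hj : j < a
    · simp [hj, lt_of_le_of_lt hij hj]
    · simp [hj]
  finite' := ⟨a, fun i hi => by simp [Nat.not_lt.2 hi]⟩

/-- The complement `K_{a,b} - γ = (b - γ_a, …, b - γ_1)` of `γ` in the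
`a × b` rectangle. -/
def Partn.compl (a b : ℕ) (γ : Partn) : Partn where
  parts i := if i < a then b - γ.parts (a - 1 - i) else 0
  antitone' := by
    intro i j hij
    by_cases hj : j < a
    · have hi : i < a := lt_of_le_of_lt hij hj
      simp only [hi, hj, if_true]
      exact Nat.sub_le_sub_left (γ.antitone' (by omega)) b
    · simp [hj]
  finite' := ⟨a, fun i hi => by simp [Nat.not_lt.2 hi]⟩

/-- The partition `ν + K_{a,b} = (ν_1 + b, …, ν_a + b)`. -/
def Partn.addRect (a b : ℕ) (ν : Partn) : Partn where
  parts i := ν.parts i + (if i < a then b else 0)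
  antitone' := by
    intro i j hij
    have h1 := ν.antitone' hij
    by_cases hj : j < a
    · simp only [hj, lt_of_le_of_lt hij hj, if_true]
      omega
    · by_cases hi : i < a <;> simp only [hi, hj, if_true, if_false] <;> omega
  finite' := by
    obtain ⟨N, hN⟩ := ν.finite'
    exact ⟨N + a, fun i hi => by simp [hN i (by omega), Nat.not_lt.2 (by omega : a ≤ i)]⟩

/-- `T : ℕ → ℕ → ℕ` is a semistandard Young tableau of shape `μ` with
entries in `{0, …, n-1}` (and value `0` outside the shape): rows weakly
increase, columns strictly increase. -/
def IsSSYT (μ : Partn) (n : ℕ) (T : ℕ → ℕ → ℕ) : Prop :=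
  (∀ i j, j < μ.parts i → T i j < n) ∧
  (∀ i j k, j ≤ k → k < μ.parts i → T i j ≤ T i k) ∧
  (∀ i i' j, i < i' → j < μ.parts i' → T i j < T i' j) ∧
  (∀ i j, μ.parts i ≤ j → T i j = 0)

open Classical in
/-- The Schur polynomial of `μ` in `n` variables, defined combinatorially as the
generating function of semistandard Young tableaux of shape `μ` with entries in
`{0, …, n-1}`. -/
noncomputable def schur (n : ℕ) (μ : Partn) : MvPolynomial (Fin n) ℤ :=
  ∑ᶠ T : ℕ → ℕ → ℕ, if IsSSYT μ n T then
    ∏ k : Fin n, X k ^ (Set.ncard {p : ℕ × ℕ | p.2 < μ.parts p.1 ∧ T p.1 p.2 = (k : ℕ)})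
  else 0

/-- The alternant `a_{f+δ} = ∑_σ sgn(σ) ∏_i x_i^{(f+δ)_{σ(i)}}` in `n` variables,
where `δ = (n-1, n-2, …, 0)`. -/
noncomputable def alternant (n : ℕ) (f : ℕ → ℕ) : MvPolynomial (Fin n) ℤ :=
  ∑ σ : Equiv.Perm (Fin n),
    (Equiv.Perm.sign σ : ℤ) • ∏ i : Fin n, X i ^ (f (σ i) + (n - 1 - (σ i : ℕ)))

/-- The Littlewood–Richardson coefficient `c_{α,β}^γ`, defined by the Schur
expansion `s_α s_β = ∑_γ c_{α,β}^γ s_γ` in the ring of symmetric functions;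
equivalently (as here) `c_{α,β}^γ` is the coefficient of `x^{γ+δ}` in
`s_α ⬝ a_{β+δ}` in sufficiently many variables. -/
noncomputable def LR (α β γ : Partn) : ℤ :=
  MvPolynomial.coeff
    (Finsupp.equivFunOnFinite.symm
      fun i : Fin (α.weight + β.weight + 1) =>
        γ.parts i + (α.weight + β.weight + 1 - 1 - (i : ℕ)))
    (schur (α.weight + β.weight + 1) α * alternant (α.weight + β.weight + 1) β.parts)

/-- The multi-Littlewood–Richardson coefficient `c_{α,β,γ}^λ`, defined by
`s_α s_β s_γ = ∑_λ c_{α,β,γ}^λ s_λ`. -/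
noncomputable def LR3 (α β γ lam : Partn) : ℤ :=
  MvPolynomial.coeff
    (Finsupp.equivFunOnFinite.symm
      fun i : Fin (α.weight + β.weight + γ.weight + 1) =>
        lam.parts i + (α.weight + β.weight + γ.weight + 1 - 1 - (i : ℕ)))
    (schur (α.weight + β.weight + γ.weight + 1) α *
      schur (α.weight + β.weight + γ.weight + 1) β *
      alternant (α.weight + β.weight + γ.weight + 1) γ.parts)

/-- The skew Schur polynomial `s_{λ/μ} = ∑_ψ c_{μ,ψ}^λ s_ψ` in `n` variables. -/
noncomputable def skewSchur (n : ℕ) (lam mu : Partn) : MvPolynomial (Fin n) ℤ :=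
  ∑ᶠ ψ : Partn, LR mu ψ lam • schur n ψ

/-- The `m`-th elementary symmetric polynomial in `n` variables, indexed by an
integer, with `ε_m = 0` for `m < 0`. -/
noncomputable def esymmZ (n : ℕ) (m : ℤ) : MvPolynomial (Fin n) ℤ :=
  if 0 ≤ m then MvPolynomial.esymm (Fin n) ℤ m.toNat else 0

namespace Finset

variable {α : Type*} [LinearOrder α]

theorem orderEmbOfFin_mem_iff_lt_card_filter {s : Finset α} {k : ℕ} (h : #s = k)
    {P : α → Prop} [DecidablePred P] (hP : IsLowerSet {x | P x}) (j : Fin k) :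
    P (s.orderEmbOfFin h j) ↔ (j : ℕ) < #{x ∈ s | P x} := by
  set e := s.orderEmbOfFin h
  constructor
  · intro hj
    calc (j : ℕ) < #(Iic j) := by simp
      _ ≤ #{x ∈ s | P x} := card_le_card_of_injOn e
          (fun i hi => mem_filter.2 ⟨orderEmbOfFin_mem s h i, hP (e.monotone (mem_Iic.1 hi)) hj⟩)
          e.injective.injOn
  · intro hj
    by_contra hPj
    have hsub : {x ∈ s | P x} ⊆ (Iio j).image e := by
      intro x hx
      rw [mem_filter] at hx
      obtain ⟨i, rfl⟩ : x ∈ Set.range e := by rw [range_orderEmbOfFin]; exact hx.1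
      exact mem_image_of_mem e (mem_Iio.2 (lt_of_not_ge fun hji => hPj (hP (e.monotone hji) hx.2)))
    have := (card_le_card hsub).trans card_image_le
    rw [Fin.card_Iio] at this
    omega

variable {A B : Finset α} {p q : ℕ}

theorem card_filter_le_of_orderEmbOfFin_le (hA : #A = p) (hB : #B = q) (hqp : q ≤ p)
    (h : ∀ r, A.orderEmbOfFin hA (Fin.castLE hqp r) ≤ B.orderEmbOfFin hB r)
    {P : α → Prop} [DecidablePred P] (hP : IsLowerSet {x | P x}) :
    #{x ∈ B | P x} ≤ #{x ∈ A | P x} := by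
  obtain h0 | hpos := Nat.eq_zero_or_pos #{x ∈ B | P x}
  · omega
  have hm : #{x ∈ B | P x} - 1 < q := by
    have := card_filter_le B fun x => P x
    omega
  have hBm := (orderEmbOfFin_mem_iff_lt_card_filter hB hP ⟨_, hm⟩).2 (by simp only; omega)
  have hAm := (orderEmbOfFin_mem_iff_lt_card_filter hA hP _).1 (hP (h ⟨_, hm⟩) hBm)
  simp only [Fin.val_castLE] at hAm
  omega

theorem orderEmbOfFin_le_of_card_filter_le (hA : #A = p) (hB : #B = q) (hqp : q ≤ p)
    (h : ∀ b, #{x ∈ B | x ≤ b} ≤ #{x ∈ A | x ≤ b}) (r : Fin q) :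
    A.orderEmbOfFin hA (Fin.castLE hqp r) ≤ B.orderEmbOfFin hB r := by
  by_contra! hlt
  set b := B.orderEmbOfFin hB r
  have hBr := (orderEmbOfFin_mem_iff_lt_card_filter hB (isLowerSet_Iic b) r).1 le_rfl
  have hAr := (orderEmbOfFin_mem_iff_lt_card_filter hA (isLowerSet_Iic b) (Fin.castLE hqp r)).not.1
    hlt.not_ge
  simp only [Fin.val_castLE] at hAr
  have := h b
  omega

end Finset

theorem Partn.lt_conj_parts_iff (μ : Partn) (i j : ℕ) : j < μ.conj.parts i ↔ i < μ.parts j := by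
  set L := {k | i < μ.parts k}
  have hL : IsLowerSet L := fun k l hlk hk => lt_of_lt_of_le hk (μ.antitone' hlk)
  have hfin : L.Finite := by
    obtain ⟨N, hN⟩ := μ.finite'
    refine (Set.finite_Iio N).subset fun k hk => ?_
    by_contra hkN
    have := hN k (not_lt.1 hkN)
    simp only [L, Set.mem_ofPred_eq] at hk
    omega
  obtain hU | ⟨m, hm⟩ := hL.eq_univ_or_Iio
  · exact absurd (hU ▸ hfin) Set.infinite_univ
  change j < L.ncard ↔ j ∈ L
  rw [hm, ← Finset.coe_range, Set.ncard_coe_finset, Finset.card_range, Finset.coe_range,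
    Set.mem_Iio]

theorem Fin.strictMono_sub_iff_antitone {a : ℕ} {f : Fin a → ℕ} :
    StrictMono (fun i : Fin a => (i : ℤ) - f i) ↔ Antitone f := by
  constructor
  · intro h
    cases a with
    | zero => exact fun i => i.elim0
    | succ a =>
      refine Fin.antitone_iff_succ_le.2 fun i => ?_
      have := h (Fin.castSucc_lt_succ (i := i))
      simp only [Fin.val_succ, Fin.val_castSucc] at this
      omega
  · intro h i j hij
    have := h hij.le
    have : (i : ℕ) < j := hij
    dsimp only
    omega

namespace Giambelli

open Finset MvPolynomial Equiv

variable {n : ℕ}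

def countBelow (s : Finset (Fin n)) (t : ℕ) : ℕ := #{x ∈ s | x.val < t}

def countFrom (s : Finset (Fin n)) (t : ℕ) : ℕ := #{x ∈ s | t ≤ x.val}

theorem countBelow_add_countFrom (s : Finset (Fin n)) (t : ℕ) :
    countBelow s t + countFrom s t = #s := by
  simpa only [countBelow, countFrom, not_lt] using
    card_filter_add_card_filter_not (s := s) fun x : Fin n => x.val < t

theorem countFrom_zero (s : Finset (Fin n)) : countFrom s 0 = #s := by
  simp [countFrom]

theorem countFrom_of_le (s : Finset (Fin n)) {t : ℕ} (h : n ≤ t) : countFrom s t = 0 := by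
  simp only [countFrom, card_eq_zero, filter_eq_empty_iff, not_le]
  exact fun x _ => x.isLt.trans_le h

theorem countFrom_succ_le (s : Finset (Fin n)) (t : ℕ) : countFrom s (t + 1) ≤ countFrom s t :=
  card_le_card (monotone_filter_right s fun _ h => by omega)

theorem countFrom_le_succ_add_one (s : Finset (Fin n)) (t : ℕ) :
    countFrom s t ≤ countFrom s (t + 1) + 1 :=
  calc countFrom s t ≤ #({x ∈ s | t + 1 ≤ x.val} ∪ {x ∈ s | x.val = t}) :=
        card_le_card fun x hx => by simp only [mem_filter, mem_union] at hx ⊢; grind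
    _ ≤ countFrom s (t + 1) + #{x ∈ s | x.val = t} := card_union_le _ _
    _ ≤ countFrom s (t + 1) + 1 := by
        gcongr
        exact card_le_one.2 fun x hx y hy => Fin.ext (by simp only [mem_filter] at hx hy; omega)

def swapBelow {ι : Type*} (S : ι → Finset (Fin n)) (τ : Perm ι) (t : ℕ) (k : ι) :
    Finset (Fin n) :=
  {x ∈ S k | t ≤ x.val} ∪ {x ∈ S (τ k) | x.val < t}

section SwapBelow

variable {ι : Type*} (S : ι → Finset (Fin n)) (τ : Perm ι) (t : ℕ)

theorem disjoint_filter_le_filter_lt (A B : Finset (Fin n)) :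
    Disjoint {x ∈ A | t ≤ x.val} {x ∈ B | x.val < t} :=
  disjoint_left.2 fun _ hA hB => by simp only [mem_filter] at hA hB; omega

theorem countFrom_swapBelow {u : ℕ} (h : t ≤ u) (k : ι) :
    countFrom (swapBelow S τ t k) u = countFrom (S k) u := by
  unfold countFrom swapBelow
  congr 1
  ext x
  simp only [mem_filter, mem_union]
  grind

theorem card_swapBelow (k : ι) :
    #(swapBelow S τ t k) = countFrom (S k) t + countBelow (S (τ k)) t :=
  card_union_of_disjoint (disjoint_filter_le_filter_lt t _ _)

theorem swapBelow_swapBelow (τ' : Perm ι) :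
    swapBelow (swapBelow S τ t) τ' t = swapBelow S (τ * τ') t := by
  ext k x
  simp only [swapBelow, mem_filter, mem_union, Perm.coe_mul, Function.comp_apply]
  grind

theorem swapBelow_one : swapBelow S 1 t = S := by
  ext k x
  simp only [swapBelow, mem_filter, mem_union, Perm.coe_one, id_eq]
  grind

theorem prod_prod_swapBelow [Fintype ι] {M : Type*} [CommMonoid M] (f : Fin n → M) :
    ∏ k, ∏ x ∈ swapBelow S τ t k, f x = ∏ k, ∏ x ∈ S k, f x := by
  simp only [swapBelow, prod_union (disjoint_filter_le_filter_lt t _ _), prod_mul_distrib]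
  rw [Equiv.prod_comp τ fun k => ∏ x ∈ S k with x.val < t, f x, ← prod_mul_distrib]
  refine prod_congr rfl fun k _ => ?_
  rw [← prod_filter_mul_prod_filter_not (S k) (fun x : Fin n => t ≤ x.val)]
  simp only [not_le]

end SwapBelow

noncomputable def weight {ι : Type*} [Fintype ι] (S : ι → Finset (Fin n)) :
    MvPolynomial (Fin n) ℤ :=
  ∏ k, ∏ x ∈ S k, X x

theorem weight_swapBelow {ι : Type*} [Fintype ι] (S : ι → Finset (Fin n)) (τ : Perm ι) (t : ℕ) :
    weight (swapBelow S τ t) = weight S :=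
  prod_prod_swapBelow S τ t X

section Paths

variable {a : ℕ} (α : Partn)

def pathPos (S : Fin a → Finset (Fin n)) (i : Fin a) (t : ℕ) : ℤ :=
  (i : ℤ) - α.parts i + countFrom (S i) t

/-- `(σ, S)` indexes a term of the Leibniz expansion of `det [ε_{α i + j - i}]`. -/
def IsAdmissible (σ : Perm (Fin a)) (S : Fin a → Finset (Fin n)) : Prop :=
  ∀ i, (#(S i) : ℤ) = (α.parts i : ℤ) + (σ i : ℕ) - (i : ℕ)

/-- The columns of a semistandard tableau of shape `α.conj`. -/
def IsColumnFamily (S : Fin a → Finset (Fin n)) : Prop :=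
  (∀ i, #(S i) = α.parts i) ∧ ∀ t, Antitone fun i => countBelow (S i) t

def Meet (S : Fin a → Finset (Fin n)) (t : ℕ) (q : Fin a × Fin a) : Prop :=
  q.1 < q.2 ∧ pathPos α S q.1 t = pathPos α S q.2 t

def Intersecting (S : Fin a → Finset (Fin n)) : Prop := ∃ t q, Meet α S t q

open Classical in
noncomputable def lastMeet (S : Fin a → Finset (Fin n)) : ℕ :=
  Nat.findGreatest (fun t => ∃ q, Meet α S t q) n

variable {α} {S : Fin a → Finset (Fin n)}

theorem strictMono_sub_parts : StrictMono fun i : Fin a => (i : ℤ) - α.parts i := by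
  intro i j hij
  have : α.parts j ≤ α.parts i := α.antitone' hij.le
  have : (i : ℕ) < j := hij
  dsimp only
  omega

theorem pathPos_of_le {t : ℕ} (h : n ≤ t) (i : Fin a) : pathPos α S i t = (i : ℤ) - α.parts i := by
  simp [pathPos, countFrom_of_le _ h]

theorem not_meet_of_le {t : ℕ} (h : n ≤ t) (q : Fin a × Fin a) : ¬ Meet α S t q := fun hq =>
  (strictMono_sub_parts hq.1).ne (by simpa only [pathPos_of_le h] using hq.2)

theorem pathPos_swapBelow (τ : Perm (Fin a)) {t u : ℕ} (h : t ≤ u) (k : Fin a) :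
    pathPos α (swapBelow S τ t) k u = pathPos α S k u := by
  rw [pathPos, pathPos, countFrom_swapBelow S τ t h]

theorem meet_swapBelow_iff (τ : Perm (Fin a)) {t u : ℕ} (h : t ≤ u) (q : Fin a × Fin a) :
    Meet α (swapBelow S τ t) u q ↔ Meet α S u q := by
  simp only [Meet, pathPos_swapBelow τ h]

theorem exists_meet_lastMeet (h : Intersecting α S) : ∃ q, Meet α S (lastMeet α S) q := by
  classical
  obtain ⟨t, q, hq⟩ := h
  exact Nat.findGreatest_spec (P := fun t => ∃ q, Meet α S t q)
    (not_lt.1 fun hnt => not_meet_of_le hnt.le q hq) ⟨q, hq⟩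

theorem not_meet_of_lastMeet_lt {t : ℕ} (ht : lastMeet α S < t) (q : Fin a × Fin a) :
    ¬ Meet α S t q := by
  classical
  by_cases htn : t ≤ n
  · exact fun hq => Nat.findGreatest_is_greatest (P := fun t => ∃ q, Meet α S t q) ht htn ⟨q, hq⟩
  · exact not_meet_of_le (by omega) q

theorem lastMeet_swapBelow (h : Intersecting α S) (τ : Perm (Fin a)) :
    lastMeet α (swapBelow S τ (lastMeet α S)) = lastMeet α S := by
  classical
  rw [lastMeet, Nat.findGreatest_eq_iff]
  refine ⟨Nat.findGreatest_le n, fun _ => ?_, fun t ht _ => ?_⟩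
  · simpa only [meet_swapBelow_iff τ le_rfl] using exists_meet_lastMeet h
  · simpa only [meet_swapBelow_iff τ ht.le, not_exists] using not_meet_of_lastMeet_lt ht

theorem IsAdmissible.swapBelow {σ : Perm (Fin a)} (hS : IsAdmissible α σ S) {τ : Perm (Fin a)}
    {t : ℕ} (hτ : ∀ k, pathPos α S (τ k) t = pathPos α S k t) :
    IsAdmissible α (σ * τ) (swapBelow S τ t) := by
  intro k
  have h1 := countBelow_add_countFrom (S (τ k)) t
  have h2 := hS (τ k)
  have h3 := hτ k
  rw [card_swapBelow, Perm.mul_apply]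
  simp only [pathPos] at h3
  push_cast
  omega

end Paths

section Involution

variable {a : ℕ} {α : Partn} {S : Fin a → Finset (Fin n)}

variable (α) in
/-- Any choice of meeting pair would do, provided it only depends on the positions at and above the
last meeting level, which exchanging tails below that level preserves. -/
noncomputable def meetSwap (S : Fin a → Finset (Fin n)) (h : Intersecting α S) : Perm (Fin a) :=
  swap (exists_meet_lastMeet h).choose.1 (exists_meet_lastMeet h).choose.2

theorem meetSwap_ne_one (h : Intersecting α S) : meetSwap α S h ≠ 1 :=
  fun h1 => (exists_meet_lastMeet h).choose_spec.1.ne (swap_eq_one_iff.1 h1)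

theorem pathPos_meetSwap (h : Intersecting α S) (k : Fin a) :
    pathPos α S (meetSwap α S h k) (lastMeet α S) = pathPos α S k (lastMeet α S) := by
  have hq := (exists_meet_lastMeet h).choose_spec.2
  rw [meetSwap, swap_apply_def]
  split_ifs with h1 h2
  · rw [h1, hq]
  · rw [h2, hq]
  · rfl

theorem intersecting_swapBelow (h : Intersecting α S) (τ : Perm (Fin a)) :
    Intersecting α (swapBelow S τ (lastMeet α S)) := by
  obtain ⟨q, hq⟩ := exists_meet_lastMeet h
  exact ⟨lastMeet α S, q, (meet_swapBelow_iff τ le_rfl q).2 hq⟩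

theorem meetSwap_swapBelow (h : Intersecting α S) (τ : Perm (Fin a))
    (h' : Intersecting α (swapBelow S τ (lastMeet α S))) :
    meetSwap α (swapBelow S τ (lastMeet α S)) h' = meetSwap α S h := by
  have hP : (fun q => Meet α (swapBelow S τ (lastMeet α S))
      (lastMeet α (swapBelow S τ (lastMeet α S))) q) = fun q => Meet α S (lastMeet α S) q := by
    funext q
    rw [lastMeet_swapBelow h, meet_swapBelow_iff τ le_rfl]
  have choose_congr : ∀ {P P' : Fin a × Fin a → Prop} (e : ∃ q, P q) (e' : ∃ q, P' q),
      P = P' → e.choose = e'.choose := by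
    rintro P _ e e' rfl
    rfl
  rw [meetSwap, meetSwap, choose_congr _ (exists_meet_lastMeet h) hP]

variable (α) in
noncomputable def untangle (p : Perm (Fin a) × (Fin a → Finset (Fin n))) (h : Intersecting α p.2) :
    Perm (Fin a) × (Fin a → Finset (Fin n)) :=
  (p.1 * meetSwap α p.2 h, swapBelow p.2 (meetSwap α p.2 h) (lastMeet α p.2))

theorem untangle_untangle (p : Perm (Fin a) × (Fin a → Finset (Fin n))) (h : Intersecting α p.2)
    (h' : Intersecting α (untangle α p h).2) : untangle α (untangle α p h) h' = p := by
  obtain ⟨σ, S⟩ := p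
  have hswap : meetSwap α (untangle α (σ, S) h).2 h' = meetSwap α S h :=
    meetSwap_swapBelow h _ h'
  simp only [untangle] at hswap ⊢
  rw [hswap, lastMeet_swapBelow h, swapBelow_swapBelow, meetSwap, swap_mul_self, mul_assoc,
    swap_mul_self, mul_one, swapBelow_one]

theorem sum_admissible_intersecting_eq_zero [DecidablePred fun p :
      Perm (Fin a) × (Fin a → Finset (Fin n)) => IsAdmissible α p.1 p.2 ∧ Intersecting α p.2] :
    ∑ p ∈ univ.filter (fun p : Perm (Fin a) × (Fin a → Finset (Fin n)) =>
      IsAdmissible α p.1 p.2 ∧ Intersecting α p.2), Perm.sign p.1 • weight p.2 = 0 := by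
  refine sum_involution (fun p hp => untangle α p (mem_filter.1 hp).2.2) ?_ ?_ ?_ ?_
  · intro p hp
    rw [untangle, Perm.sign_mul, meetSwap,
      Perm.sign_swap (exists_meet_lastMeet (mem_filter.1 hp).2.2).choose_spec.1.ne,
      mul_neg_one, weight_swapBelow, Units.neg_smul, add_neg_cancel]
  · intro p hp _ hfix
    exact meetSwap_ne_one (mem_filter.1 hp).2.2 (mul_eq_left.1 (congrArg Prod.fst hfix))
  · intro p hp
    obtain ⟨hadm, hint⟩ := (mem_filter.1 hp).2
    exact mem_filter.2 ⟨mem_univ _, hadm.swapBelow (pathPos_meetSwap hint),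
      intersecting_swapBelow hint _⟩
  · intro p hp
    exact untangle_untangle p _ _

end Involution

section NonIntersecting

variable {a : ℕ} {α : Partn} {S : Fin a → Finset (Fin n)}

theorem pathPos_succ_le (i : Fin a) (t : ℕ) : pathPos α S i (t + 1) ≤ pathPos α S i t := by
  simp only [pathPos]
  have := countFrom_succ_le (S i) t
  omega

theorem pathPos_le_succ_add_one (i : Fin a) (t : ℕ) :
    pathPos α S i t ≤ pathPos α S i (t + 1) + 1 := by
  simp only [pathPos]
  have := countFrom_le_succ_add_one (S i) t
  omega

theorem pathPos_eq_sub_countBelow {i : Fin a} (h : #(S i) = α.parts i) (t : ℕ) :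
    pathPos α S i t = (i : ℤ) - countBelow (S i) t := by
  have := countBelow_add_countFrom (S i) t
  simp only [pathPos]
  omega

theorem IsAdmissible.pathPos_zero {σ : Perm (Fin a)} (h : IsAdmissible α σ S) (i : Fin a) :
    pathPos α S i 0 = (σ i : ℕ) := by
  have := h i
  rw [pathPos, countFrom_zero]
  omega

theorem not_intersecting_iff : ¬ Intersecting α S ↔ ∀ t, StrictMono fun i => pathPos α S i t := by
  refine ⟨fun h t => ?_, fun h ⟨t, q, hq, he⟩ => (h t hq).ne he⟩
  obtain hnt | htn := le_total n t
  · simpa only [pathPos_of_le hnt] using strictMono_sub_parts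
  induction htn using Nat.decreasingInduction with
  | self => simpa only [pathPos_of_le le_rfl] using strictMono_sub_parts
  | of_succ t _ ih =>
    intro i j hij
    refine lt_of_le_of_ne ?_ fun he => h ⟨t, (i, j), hij, he⟩
    linarith [ih hij, pathPos_le_succ_add_one (α := α) (S := S) i t,
      pathPos_succ_le (α := α) (S := S) j t]

theorem isAdmissible_and_not_intersecting_iff {σ : Perm (Fin a)} :
    IsAdmissible α σ S ∧ ¬ Intersecting α S ↔ σ = 1 ∧ IsColumnFamily α S := by
  rw [not_intersecting_iff]
  constructor
  · rintro ⟨hadm, hmono⟩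
    obtain rfl : σ = 1 := by
      have hσ : StrictMono σ := fun i j hij => by
        simpa only [hadm.pathPos_zero, Nat.cast_lt, Fin.val_fin_lt] using hmono 0 hij
      exact Perm.ext fun i => congrFun hσ.eq_id i
    have hcard (i : Fin a) : #(S i) = α.parts i := by
      have := hadm i
      simp only [Perm.coe_one, id_eq] at this
      omega
    refine ⟨rfl, hcard, fun t => Fin.strictMono_sub_iff_antitone.1 ?_⟩
    simpa only [pathPos_eq_sub_countBelow (hcard _)] using hmono t
  · rintro ⟨rfl, hcard, hanti⟩
    refine ⟨fun i => by simp [hcard], fun t => ?_⟩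
    simpa only [pathPos_eq_sub_countBelow (hcard _)] using
      Fin.strictMono_sub_iff_antitone.2 (hanti t)

theorem sum_admissible_not_intersecting [DecidablePred fun p :
      Perm (Fin a) × (Fin a → Finset (Fin n)) => IsAdmissible α p.1 p.2 ∧ ¬ Intersecting α p.2]
    [DecidablePred fun S : Fin a → Finset (Fin n) => IsColumnFamily α S] :
    ∑ p ∈ univ.filter (fun p : Perm (Fin a) × (Fin a → Finset (Fin n)) =>
      IsAdmissible α p.1 p.2 ∧ ¬ Intersecting α p.2), Perm.sign p.1 • weight p.2 =
      ∑ S ∈ univ.filter fun S : Fin a → Finset (Fin n) => IsColumnFamily α S, weight S := by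
  have : univ.filter (fun p : Perm (Fin a) × (Fin a → Finset (Fin n)) =>
      IsAdmissible α p.1 p.2 ∧ ¬ Intersecting α p.2) =
      (univ.filter fun S : Fin a → Finset (Fin n) => IsColumnFamily α S).map
        (Function.Embedding.sectR 1 _) := by
    ext ⟨σ, S⟩
    simp only [mem_filter, mem_univ, true_and, isAdmissible_and_not_intersecting_iff, mem_map,
      Function.Embedding.sectR_apply, Prod.mk.injEq]
    grind
  simp [this]

end NonIntersecting

theorem esymmZ_eq_sum (m : ℤ) :
    esymmZ n m = ∑ s ∈ univ.filter (fun s : Finset (Fin n) => (#s : ℤ) = m), ∏ x ∈ s, X x := by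
  rw [esymmZ]
  split_ifs with hm
  · rw [esymm, powersetCard_eq_filter, powerset_univ]
    refine sum_congr (filter_congr fun s _ => ?_) fun _ _ => rfl
    omega
  · refine (sum_eq_zero fun s hs => ?_).symm
    have := (mem_filter.1 hs).2
    omega

theorem det_esymmZ_eq_sum_admissible {a : ℕ} (α : Partn) [DecidablePred fun p :
      Perm (Fin a) × (Fin a → Finset (Fin n)) => IsAdmissible α p.1 p.2] :
    Matrix.det (Matrix.of fun i j : Fin a => esymmZ n ((α.parts i : ℤ) + (j : ℕ) - (i : ℕ))) =
      ∑ p ∈ univ.filter (fun p : Perm (Fin a) × (Fin a → Finset (Fin n)) =>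
        IsAdmissible α p.1 p.2), Perm.sign p.1 • weight p.2 := by
  classical
  rw [← Matrix.det_transpose, Matrix.det_apply, ← univ_product_univ, sum_filter, sum_product]
  refine sum_congr rfl fun σ _ => ?_
  simp only [← sum_filter, ← smul_sum, Matrix.transpose_apply, Matrix.of_apply, esymmZ_eq_sum,
    prod_univ_sum]
  congr 1
  refine sum_congr ?_ fun _ _ => rfl
  ext S
  rw [Fintype.mem_piFinset, mem_filter]
  simp [IsAdmissible]

section Tableaux

variable {a : ℕ} {α : Partn}

noncomputable def ofColumns (S : Fin a → Finset (Fin n)) (r c : ℕ) : ℕ :=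
  if hc : c < a then
    if hr : r < #(S ⟨c, hc⟩) then (S ⟨c, hc⟩).orderEmbOfFin rfl ⟨r, hr⟩ else 0
  else 0

theorem ofColumns_apply (S : Fin a → Finset (Fin n)) (c : Fin a) (r : Fin #(S c)) :
    ofColumns S r c = (S c).orderEmbOfFin rfl r := by
  simp [ofColumns, c.isLt, r.isLt]

theorem mem_iff_exists_ofColumns (S : Fin a → Finset (Fin n)) (c : Fin a) (x : Fin n) :
    x ∈ S c ↔ ∃ r < #(S c), ofColumns S r c = x := by
  rw [← Finset.mem_coe, ← range_orderEmbOfFin (S c) rfl]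
  constructor
  · rintro ⟨r, rfl⟩
    exact ⟨r, r.isLt, ofColumns_apply S c r⟩
  · rintro ⟨r, hr, hx⟩
    exact ⟨⟨r, hr⟩, Fin.ext (by rw [← hx, ofColumns_apply S c ⟨r, hr⟩])⟩

theorem lt_of_lt_parts (hα : ∀ i, a ≤ i → α.parts i = 0) {r c : ℕ} (h : r < α.parts c) :
    c < a :=
  not_le.1 fun hc => by rw [hα c hc] at h; omega

theorem card_filter_le_eq_countBelow (s : Finset (Fin n)) (b : Fin n) :
    #{x ∈ s | x ≤ b} = countBelow s (b + 1) := by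
  simp only [countBelow, Nat.lt_succ_iff, Fin.le_def]

theorem isSSYT_ofColumns (hα : ∀ i, a ≤ i → α.parts i = 0) {S : Fin a → Finset (Fin n)}
    (hS : IsColumnFamily α S) : IsSSYT α.conj n (ofColumns S) := by
  obtain ⟨hcard, hanti⟩ := hS
  have cell {r c : ℕ} (h : c < α.conj.parts r) : ∃ c' : Fin a, c = c' ∧ r < #(S c') := by
    rw [Partn.lt_conj_parts_iff] at h
    exact ⟨⟨c, lt_of_lt_parts hα h⟩, rfl, by rwa [hcard]⟩
  refine ⟨fun r c h => ?_, fun r c c' hcc' h => ?_, fun r r' c hrr' h => ?_, fun r c h => ?_⟩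
  · obtain ⟨c, rfl, hr⟩ := cell h
    rw [ofColumns_apply S c ⟨r, hr⟩]
    exact Fin.isLt _
  · obtain ⟨c', rfl, hr⟩ := cell h
    have hc : c < a := hcc'.trans_lt c'.isLt
    have hle : #(S c') ≤ #(S ⟨c, hc⟩) := by
      rw [hcard, hcard]
      exact α.antitone' hcc'
    calc ofColumns S r c = (S ⟨c, hc⟩).orderEmbOfFin rfl (Fin.castLE hle ⟨r, hr⟩) :=
          ofColumns_apply S ⟨c, hc⟩ (Fin.castLE hle ⟨r, hr⟩)
      _ ≤ (S c').orderEmbOfFin rfl ⟨r, hr⟩ :=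
          Fin.le_def.1 (orderEmbOfFin_le_of_card_filter_le rfl rfl hle (fun b => ?_) _)
      _ = ofColumns S r c' := (ofColumns_apply S c' ⟨r, hr⟩).symm
    rw [card_filter_le_eq_countBelow, card_filter_le_eq_countBelow]
    exact hanti _ (Fin.le_def.2 hcc')
  · obtain ⟨c, rfl, hr'⟩ := cell h
    rw [ofColumns_apply S c ⟨r', hr'⟩, ofColumns_apply S c ⟨r, hrr'.trans hr'⟩]
    exact (S c).orderEmbOfFin rfl |>.strictMono (Fin.mk_lt_mk.2 hrr')
  · rw [← not_lt, Partn.lt_conj_parts_iff] at h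
    unfold ofColumns
    split_ifs with hc hr
    · exact absurd (hcard ⟨c, hc⟩ ▸ hr) h
    all_goals rfl

theorem exists_ofColumns_eq (hα : ∀ i, a ≤ i → α.parts i = 0) {T : ℕ → ℕ → ℕ}
    (hT : IsSSYT α.conj n T) :
    ∃ S : Fin a → Finset (Fin n), IsColumnFamily α S ∧ ofColumns S = T := by
  obtain ⟨hlt, hrow, hcol, hzero⟩ := hT
  have cell {r c : ℕ} (h : r < α.parts c) : c < α.conj.parts r :=
    (Partn.lt_conj_parts_iff _ _ _).2 h
  let col (c : Fin a) (r : Fin (α.parts c)) : Fin n := ⟨T r c, hlt _ _ (cell r.isLt)⟩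
  have col_strictMono (c : Fin a) : StrictMono (col c) := fun r r' h => hcol _ _ _ h (cell r'.isLt)
  let S (c : Fin a) : Finset (Fin n) := univ.image (col c)
  have hcard (c : Fin a) : #(S c) = α.parts c := by
    simp [S, card_image_of_injective _ (col_strictMono c).injective]
  have hS (c : Fin a) (r : Fin #(S c)) : ((S c).orderEmbOfFin rfl r : ℕ) = T r c := by
    rw [← orderEmbOfFin_unique rfl (f := fun r => col c (Fin.cast (hcard c) r))
      (fun r => mem_image_of_mem _ (mem_univ _)) ((col_strictMono c).comp (Fin.cast_strictMono _))]
    rfl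
  refine ⟨S, ⟨hcard, fun t i j hij => ?_⟩, funext fun r => funext fun c => ?_⟩
  · have hle : #(S j) ≤ #(S i) := by
      rw [hcard, hcard]
      exact α.antitone' hij
    refine card_filter_le_of_orderEmbOfFin_le rfl rfl hle (fun r => ?_)
      fun x y hyx hx => lt_of_le_of_lt (Fin.le_def.1 hyx) hx
    rw [Fin.le_def, hS, hS]
    exact hrow _ _ _ hij (cell (hcard j ▸ r.isLt))
  · by_cases h : ∃ hc : c < a, r < #(S ⟨c, hc⟩)
    · obtain ⟨hc, hr⟩ := h
      rw [ofColumns_apply S ⟨c, hc⟩ ⟨r, hr⟩, hS]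
    · rw [hzero _ _ (not_lt.1 fun hrc => h ?_)]
      · unfold ofColumns
        grind
      · rw [Partn.lt_conj_parts_iff] at hrc
        exact ⟨lt_of_lt_parts hα hrc, by rwa [hcard]⟩

theorem ofColumns_injOn :
    Set.InjOn (ofColumns (n := n) (a := a)) {S | ∀ i, #(S i) = α.parts i} := by
  intro S hS S' hS' h
  funext c
  ext x
  rw [mem_iff_exists_ofColumns, mem_iff_exists_ofColumns, h, hS c, hS' c]

theorem ncard_cells_ofColumns (hα : ∀ i, a ≤ i → α.parts i = 0) {S : Fin a → Finset (Fin n)}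
    (hcard : ∀ i, #(S i) = α.parts i) (k : Fin n) :
    Set.ncard {p : ℕ × ℕ | p.2 < α.conj.parts p.1 ∧ ofColumns S p.1 p.2 = k} =
      #{c | k ∈ S c} := by
  rw [← Set.ncard_coe_finset]
  refine Set.ncard_congr (fun p hp => (⟨p.2, lt_of_lt_parts hα
    ((Partn.lt_conj_parts_iff _ _ _).1 hp.1)⟩ : Fin a)) ?_ ?_ ?_
  · rintro ⟨r, c⟩ ⟨hcell, hk⟩
    rw [Partn.lt_conj_parts_iff] at hcell
    simp only [coe_filter, mem_univ, true_and, Set.mem_ofPred_eq]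
    exact (mem_iff_exists_ofColumns S _ k).2 ⟨r, by rwa [hcard], hk⟩
  · rintro ⟨r, c⟩ ⟨r', c'⟩ ⟨hcell, hk⟩ ⟨hcell', hk'⟩ hcc'
    obtain rfl : c = c' := congrArg Fin.val hcc'
    rw [Partn.lt_conj_parts_iff] at hcell hcell'
    have hc := lt_of_lt_parts hα hcell
    have hr : r < #(S ⟨c, hc⟩) := by rwa [hcard]
    have hr' : r' < #(S ⟨c, hc⟩) := by rwa [hcard]
    have he := (ofColumns_apply S _ ⟨r, hr⟩).symm.trans (hk.trans (hk'.symm.trans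
      (ofColumns_apply S _ ⟨r', hr'⟩)))
    have := ((S ⟨c, hc⟩).orderEmbOfFin rfl).injective (Fin.ext he)
    simp only [Fin.mk.injEq] at this
    rw [this]
  · intro c hc
    obtain ⟨r, hr, hk⟩ := (mem_iff_exists_ofColumns S c k).1 (by simpa using hc)
    exact ⟨(r, c), ⟨by rw [Partn.lt_conj_parts_iff, ← hcard]; exact hr, hk⟩, rfl⟩

theorem monomial_ofColumns (hα : ∀ i, a ≤ i → α.parts i = 0) {S : Fin a → Finset (Fin n)}
    (hcard : ∀ i, #(S i) = α.parts i) :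
    ∏ k : Fin n, (X k : MvPolynomial (Fin n) ℤ) ^
      Set.ncard {p : ℕ × ℕ | p.2 < α.conj.parts p.1 ∧ ofColumns S p.1 p.2 = k} =
      weight S := by
  classical
  simp_rw [ncard_cells_ofColumns hα hcard]
  calc ∏ k : Fin n, (X k : MvPolynomial (Fin n) ℤ) ^ #{c | k ∈ S c}
      = ∏ k, ∏ c, if k ∈ S c then X k else 1 := by simp only [← prod_filter, prod_const]
    _ = ∏ c, ∏ k, if k ∈ S c then X k else 1 := prod_comm
    _ = weight S := by simp only [prod_ite_mem, univ_inter, weight]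

theorem schur_conj_eq_sum_weight (hα : ∀ i, a ≤ i → α.parts i = 0)
    [DecidablePred fun S : Fin a → Finset (Fin n) => IsColumnFamily α S] :
    schur n α.conj =
      ∑ S ∈ univ.filter fun S : Fin a → Finset (Fin n) => IsColumnFamily α S, weight S := by
  classical
  have hsupp : Function.support (fun T => if IsSSYT α.conj n T then
      ∏ k : Fin n, (X k : MvPolynomial (Fin n) ℤ) ^
        Set.ncard {p : ℕ × ℕ | p.2 < α.conj.parts p.1 ∧ T p.1 p.2 = k} else 0) ⊆
      ((univ.filter fun S : Fin a → Finset (Fin n) => IsColumnFamily α S).image ofColumns) := by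
    intro T hT
    obtain ⟨S, hS, rfl⟩ := exists_ofColumns_eq hα (of_not_not fun h => hT (if_neg h))
    simpa using ⟨S, hS, rfl⟩
  rw [schur, finsum_eq_sum_of_support_subset _ hsupp,
    sum_image fun S hS S' hS' => ofColumns_injOn (mem_filter.1 hS).2.1 (mem_filter.1 hS').2.1]
  refine sum_congr rfl fun S hS => ?_
  rw [if_pos (isSSYT_ofColumns hα (mem_filter.1 hS).2), monomial_ofColumns hα (mem_filter.1 hS).2.1]

end Tableaux

end Giambelli

open Giambelli Finset Equiv

/-- **Dual Giambelli formula.** For a partition `α` with at most `a` parts, the Schur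
polynomial of the conjugate partition is
`π_{ᾱ} = det[ε_{α_i + j - i}]_{i,j=1}^a`. -/
theorem giambelli (n a : ℕ) (α : Partn) (hα : ∀ i, a ≤ i → α.parts i = 0) :
    schur n α.conj =
      Matrix.det (Matrix.of fun i j : Fin a =>
        esymmZ n ((α.parts i : ℤ) + (j : ℕ) - (i : ℕ))) := by
  classical
  rw [schur_conj_eq_sum_weight hα, det_esymmZ_eq_sum_admissible,
    ← sum_filter_add_sum_filter_not _ fun p : Perm (Fin a) × (Fin a → Finset (Fin n)) =>
      Intersecting α p.2, filter_filter, filter_filter,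
    sum_admissible_intersecting_eq_zero, zero_add, sum_admissible_not_intersecting]
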